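/- Let F: ℝⁿ ⇉ ℝⁿ have convex graph and let G be defined from F as G(u₁, u₂, u, u₃, u₄) = −u₁ − θ²u₂ + (2 + 2θ² − δ²/h)u − θ²u₃ + (δ²/h)u₄ − δ²F(u), with δ, σ, h > 0, θ = δ/σ. Let (u₁,u₂,u,u₃,u₄,v) ∈ gph G and set w = (2/δ² + 2/σ² − 1/h)u + (1/h)u₄ − (1/δ²)u₁ − (1/σ²)u₂ − (1/σ²)u₃ − (1/δ²)v ∈ F(u). Then (ū₁, ū₂, ū, ū₃, ū₄, v̄) ∈ cone(gph G − (u₁,u₂,u,u₃,u₄,v)) if and only if (ū, (2/δ² + 2/σ² − 1/h)ū + (1/h)ū₄ − (1/δ²)ū₁ − (1/σ²)ū₂ − (1/σ²)ū₃ − (1/δ²)v̄) ∈ cone(gph F − (u, w)). -/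

import Mathlib

open RealInnerProductSpace

def coneOf {X : Type*} [SMul ℝ X] (A : Set X) : Set X :=
  {z | ∃ μ : ℝ, 0 < μ ∧ ∃ a ∈ A, z = μ • a}

def Gset {n : ℕ} (δ σ h : ℝ) (F : EuclideanSpace ℝ (Fin n) → Set (EuclideanSpace ℝ (Fin n)))
    (u₁ u₂ u u₃ u₄ : EuclideanSpace ℝ (Fin n)) : Set (EuclideanSpace ℝ (Fin n)) :=
  (fun w => -u₁ - (δ / σ) ^ 2 • u₂ + (2 + 2 * (δ / σ) ^ 2 - δ ^ 2 / h) • u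
      - (δ / σ) ^ 2 • u₃ + (δ ^ 2 / h) • u₄ - δ ^ 2 • w) '' F u

/-! `gph G` is the preimage of `gph F` under a linear map, and the cone of directions at a point
of a linear preimage is the preimage of the cone of directions at the image point: a direction
`z` of `B` at `Φ p₀` is realised by the point `p₀ + μ⁻¹ • z` of `Φ ⁻¹' B`. -/

section

variable {X Y : Type*} [AddCommGroup X] [Module ℝ X] [AddCommGroup Y] [Module ℝ Y]

theorem coneOf_image_sub_preimage (Φ : X →ₗ[ℝ] Y) (B : Set Y) (p₀ : X) :
    coneOf ((fun p => p - p₀) '' (Φ ⁻¹' B)) = Φ ⁻¹' coneOf ((fun q => q - Φ p₀) '' B) := by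
  ext z
  constructor
  · rintro ⟨μ, hμ, _, ⟨a, ha, rfl⟩, rfl⟩
    exact ⟨μ, hμ, Φ a - Φ p₀, ⟨Φ a, ha, rfl⟩, by simp⟩
  · rintro ⟨μ, hμ, _, ⟨b, hb, rfl⟩, hz⟩
    have hΦ : Φ (p₀ + μ⁻¹ • z) = b := by
      rw [map_add, map_smul, hz, smul_smul, inv_mul_cancel₀ hμ.ne', one_smul, add_sub_cancel]
    refine ⟨μ, hμ, μ⁻¹ • z, ⟨p₀ + μ⁻¹ • z, by simp [hΦ, hb], by simp⟩, ?_⟩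
    rw [smul_smul, mul_inv_cancel₀ hμ.ne', one_smul]

end

section

variable {E : Type*} [AddCommGroup E] [Module ℝ E]

noncomputable def graphCorrespondence (δ σ h : ℝ) : (E × E × E × E × E) × E →ₗ[ℝ] E × E where
  toFun p := (p.1.2.2.1, (2 / δ ^ 2 + 2 / σ ^ 2 - 1 / h) • p.1.2.2.1 + (1 / h) • p.1.2.2.2.2
    - (1 / δ ^ 2) • p.1.1 - (1 / σ ^ 2) • p.1.2.1 - (1 / σ ^ 2) • p.1.2.2.2.1 - (1 / δ ^ 2) • p.2)
  map_add' p q := Prod.ext rfl (by simp only [Prod.fst_add, Prod.snd_add]; module)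
  map_smul' c p := Prod.ext rfl <| by
    simp only [Prod.smul_fst, Prod.smul_snd, RingHom.id_apply]; module

end

theorem setOf_mem_Gset_eq_preimage {n : ℕ} {δ : ℝ} (hδ : δ ≠ 0) (σ h : ℝ)
    (F : EuclideanSpace ℝ (Fin n) → Set (EuclideanSpace ℝ (Fin n))) :
    {p : (EuclideanSpace ℝ (Fin n) × EuclideanSpace ℝ (Fin n) × EuclideanSpace ℝ (Fin n) ×
        EuclideanSpace ℝ (Fin n) × EuclideanSpace ℝ (Fin n)) × EuclideanSpace ℝ (Fin n) |
      p.2 ∈ Gset δ σ h F p.1.1 p.1.2.1 p.1.2.2.1 p.1.2.2.2.1 p.1.2.2.2.2} =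
      graphCorrespondence δ σ h ⁻¹' {q | q.2 ∈ F q.1} := by
  ext ⟨⟨u₁, u₂, u, u₃, u₄⟩, v⟩
  simp only [Set.mem_ofPred_eq, Set.mem_preimage, Gset, Set.mem_image]
  constructor
  · rintro ⟨w, hw, rfl⟩
    suffices hΦ : graphCorrespondence δ σ h ((u₁, u₂, u, u₃, u₄), _) = (u, w) by
      rwa [hΦ]
    refine Prod.ext rfl ?_
    simp only [graphCorrespondence, LinearMap.coe_mk, AddHom.coe_mk]
    match_scalars <;> field_simp <;> ring
  · intro hw
    refine ⟨_, hw, ?_⟩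
    simp only [graphCorrespondence, LinearMap.coe_mk, AddHom.coe_mk]
    match_scalars <;> field_simp <;> ring

theorem stmt7_general {n : ℕ} (δ σ h : ℝ) (hδ : 0 < δ)
    (F : EuclideanSpace ℝ (Fin n) → Set (EuclideanSpace ℝ (Fin n)))
    (u₁ u₂ u u₃ u₄ v w : EuclideanSpace ℝ (Fin n))
    (hw : w = (2 / δ ^ 2 + 2 / σ ^ 2 - 1 / h) • u + (1 / h) • u₄ - (1 / δ ^ 2) • u₁
      - (1 / σ ^ 2) • u₂ - (1 / σ ^ 2) • u₃ - (1 / δ ^ 2) • v)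
    (ub₁ ub₂ ub ub₃ ub₄ vb : EuclideanSpace ℝ (Fin n)) :
    (((ub₁, ub₂, ub, ub₃, ub₄), vb) ∈ coneOf
        ((fun p => p - ((u₁, u₂, u, u₃, u₄), v)) ''
          {p : (EuclideanSpace ℝ (Fin n) × EuclideanSpace ℝ (Fin n) ×
              EuclideanSpace ℝ (Fin n) × EuclideanSpace ℝ (Fin n) ×
              EuclideanSpace ℝ (Fin n)) × EuclideanSpace ℝ (Fin n) |
            p.2 ∈ Gset δ σ h F p.1.1 p.1.2.1 p.1.2.2.1 p.1.2.2.2.1 p.1.2.2.2.2})) ↔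
      ((ub, (2 / δ ^ 2 + 2 / σ ^ 2 - 1 / h) • ub + (1 / h) • ub₄ - (1 / δ ^ 2) • ub₁
          - (1 / σ ^ 2) • ub₂ - (1 / σ ^ 2) • ub₃ - (1 / δ ^ 2) • vb) ∈ coneOf
        ((fun p => p - (u, w)) ''
          {p : EuclideanSpace ℝ (Fin n) × EuclideanSpace ℝ (Fin n) | p.2 ∈ F p.1})) := by
  have hbase : graphCorrespondence δ σ h ((u₁, u₂, u, u₃, u₄), v) = (u, w) := by
    rw [hw]; rfl
  rw [setOf_mem_Gset_eq_preimage hδ.ne', coneOf_image_sub_preimage, hbase]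
  rfl

/-- Equivalence of the cones of tangent directions of `gph G` and `gph F` (Theorem 4.1). -/
theorem stmt7 {n : ℕ} (δ σ h : ℝ) (hδ : 0 < δ) (hσ : 0 < σ) (hh : 0 < h)
    (F : EuclideanSpace ℝ (Fin n) → Set (EuclideanSpace ℝ (Fin n)))
    (hF : Convex ℝ {p : EuclideanSpace ℝ (Fin n) × EuclideanSpace ℝ (Fin n) | p.2 ∈ F p.1})
    (u₁ u₂ u u₃ u₄ v w : EuclideanSpace ℝ (Fin n))
    (hv : v ∈ Gset δ σ h F u₁ u₂ u u₃ u₄)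
    (hw : w = (2 / δ ^ 2 + 2 / σ ^ 2 - 1 / h) • u + (1 / h) • u₄ - (1 / δ ^ 2) • u₁
      - (1 / σ ^ 2) • u₂ - (1 / σ ^ 2) • u₃ - (1 / δ ^ 2) • v)
    (ub₁ ub₂ ub ub₃ ub₄ vb : EuclideanSpace ℝ (Fin n)) :
    (((ub₁, ub₂, ub, ub₃, ub₄), vb) ∈ coneOf
        ((fun p => p - ((u₁, u₂, u, u₃, u₄), v)) ''
          {p : (EuclideanSpace ℝ (Fin n) × EuclideanSpace ℝ (Fin n) ×
              EuclideanSpace ℝ (Fin n) × EuclideanSpace ℝ (Fin n) ×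
              EuclideanSpace ℝ (Fin n)) × EuclideanSpace ℝ (Fin n) |
            p.2 ∈ Gset δ σ h F p.1.1 p.1.2.1 p.1.2.2.1 p.1.2.2.2.1 p.1.2.2.2.2})) ↔
      ((ub, (2 / δ ^ 2 + 2 / σ ^ 2 - 1 / h) • ub + (1 / h) • ub₄ - (1 / δ ^ 2) • ub₁
          - (1 / σ ^ 2) • ub₂ - (1 / σ ^ 2) • ub₃ - (1 / δ ^ 2) • vb) ∈ coneOf
        ((fun p => p - (u, w)) ''
          {p : EuclideanSpace ℝ (Fin n) × EuclideanSpace ℝ (Fin n) | p.2 ∈ F p.1})) :=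
  stmt7_general δ σ h hδ F u₁ u₂ u u₃ u₄ v w hw ub₁ ub₂ ub ub₃ ub₄ vb
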